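/- arXiv:1912.09462 — 3 statements merged into one kernel-verified Lean document; each statement's English description precedes it below -/
import Mathlib

section
/- Any connected (indecomposable) component E¹ of a minimizer of F_κ[F] = P(F) − κ|F| over subsets of Ω has Lebesgue measure at least 4π κ⁻². More precisely: if E = E¹ ∪ E² with |E¹|, |E²| > 0, E¹ ∩ E² = ∅ and P(E) = P(E¹) + P(E²), and E minimizes F_κ with κ > h_Ω, then |E¹| ≥ 4π/κ². -/
open MeasureTheory Set

noncomputable section

abbrev Pt := EuclideanSpace ℝ (Fin 2)

def vol (F : Set Pt) : ℝ := (volume F).toReal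

def IsMinimizer (P : Set Pt → ℝ) (κ : ℝ) (Ω E : Set Pt) : Prop :=
  E ⊆ Ω ∧ MeasurableSet E ∧
    ∀ F, F ⊆ Ω → MeasurableSet F → P E - κ * vol E ≤ P F - κ * vol F

/-- Any indecomposable component of a minimizer of `F_κ` has area at least `4π/κ²`:
if `E = E¹ ∪ E²` with `E¹, E²` disjoint of positive measure, `P(E) = P(E¹) + P(E²)`,
and `E` minimizes `F_κ` with `κ > h_Ω > 0`, then `|E¹| ≥ 4π/κ²`. -/
theorem stmt3 (Ω : Set Pt) (hΩopen : IsOpen Ω) (hΩbdd : Bornology.IsBounded Ω)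
    (P : Set Pt → ℝ)
    (hiso : ∀ F : Set Pt, 2 * Real.sqrt (Real.pi * vol F) ≤ P F)
    (h κ : ℝ) (hh : 0 < h) (hκ : h < κ)
    (E E₁ E₂ : Set Pt) (hmin : IsMinimizer P κ Ω E)
    (hdecomp : E = E₁ ∪ E₂) (hdisj : E₁ ∩ E₂ = ∅)
    (hE₁ : MeasurableSet E₁) (hE₂ : MeasurableSet E₂)
    (hv₁ : 0 < vol E₁) (hv₂ : 0 < vol E₂)
    (hP : P E = P E₁ + P E₂) :
    4 * Real.pi / κ ^ 2 ≤ vol E₁ := by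
  obtain ⟨hEΩ, hEmeas, hopt⟩ := hmin
  have hκ0 : 0 < κ := hh.trans hκ
  have hE₂Ω : E₂ ⊆ Ω := fun x hx => hEΩ (hdecomp ▸ Or.inr hx)
  -- finiteness of measures
  have hΩfin : volume Ω < ⊤ := hΩbdd.measure_lt_top
  have h1fin : volume E₁ ≠ ⊤ :=
    ((measure_mono (fun x hx => hEΩ (hdecomp ▸ Or.inl hx))).trans_lt hΩfin).ne
  have h2fin : volume E₂ ≠ ⊤ := ((measure_mono hE₂Ω).trans_lt hΩfin).ne
  -- vol E = vol E₁ + vol E₂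
  have hvolE : vol E = vol E₁ + vol E₂ := by
    rw [hdecomp, vol, measure_union (disjoint_iff_inter_eq_empty.2 hdisj) hE₂,
      ENNReal.toReal_add h1fin h2fin]; rfl
  have hkey := hopt E₂ hE₂Ω hE₂
  have hPE₁ : P E₁ ≤ κ * vol E₁ := by
    rw [hP, hvolE] at hkey; nlinarith
  have hiso₁ := hiso E₁
  have hsq : Real.sqrt (Real.pi * vol E₁) ^ 2 = Real.pi * vol E₁ :=
    Real.sq_sqrt (by positivity)
  have h4 : 4 * Real.pi * vol E₁ ≤ κ ^ 2 * vol E₁ ^ 2 := by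
    nlinarith [hiso₁.trans hPE₁, Real.sqrt_nonneg (Real.pi * vol E₁)]
  rw [div_le_iff₀ (by positivity)]
  nlinarith
end
end

section
/- Under the inner Cheeger formula setup, if πr² = |Ω^r| and Ω^r has reach ≥ r with Steiner's formulas valid, then the Cheeger constant of Ω equals 1/r, i.e. h_Ω = r⁻¹. (Equivalently: from P(Ω^r ⊕ B_r) − (1/r)|Ω^r ⊕ B_r| = 0 one deduces h_Ω ≤ 1/r; and if h_Ω < 1/r then min F_{1/r} < 0, contradicting that Ω^r ⊕ B_r is a minimizer of F_{1/r} with zero energy.) -/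
open MeasureTheory Set Pointwise

noncomputable section

def innerPar (Ω : Set Pt) (r : ℝ) : Set Pt :=
  {x ∈ Ω | r ≤ Metric.infDist x (frontier Ω)}

/-- Inner Cheeger formula: if `πr² = |Ω^r|`, Steiner's formulas hold for
`Ω^r ⊕ B_r`, this set minimizes `F_{1/r}`, and `min F_κ < 0` for every `κ > h_Ω`,
then the Cheeger constant of `Ω` equals `1/r`. -/
theorem stmt10 (Ω : Set Pt) (hΩopen : IsOpen Ω) (hΩbdd : Bornology.IsBounded Ω)
    (P : Set Pt → ℝ) (r : ℝ) (hr : 0 < r) (h : ℝ)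
    (hdef : h = sInf {x : ℝ | ∃ F, F ⊆ Ω ∧ MeasurableSet F ∧ 0 < vol F ∧ x = P F / vol F})
    (M : ℝ)
    (hSteinerPer : P (innerPar Ω r + Metric.closedBall (0 : Pt) r) = M + 2 * Real.pi * r)
    (hSteinerVol : vol (innerPar Ω r + Metric.closedBall (0 : Pt) r)
      = vol (innerPar Ω r) + r * M + Real.pi * r ^ 2)
    (hMnonneg : 0 ≤ M)
    (hinner : Real.pi * r ^ 2 = vol (innerPar Ω r))
    (hmin : IsMinimizer P (1 / r) Ω (innerPar Ω r + Metric.closedBall (0 : Pt) r))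
    (hneg : ∀ κ : ℝ, h < κ → ∃ F, F ⊆ Ω ∧ MeasurableSet F ∧ P F - κ * vol F < 0) :
    h = 1 / r := by
  obtain ⟨hEsub, hEmeas, hEmin⟩ := hmin
  set E := innerPar Ω r + Metric.closedBall (0 : Pt) r with hE
  set S := {x : ℝ | ∃ F, F ⊆ Ω ∧ MeasurableSet F ∧ 0 < vol F ∧ x = P F / vol F} with hS
  have hrne : r ≠ 0 := hr.ne'
  have hvolE : vol E = 2 * Real.pi * r ^ 2 + r * M := by
    rw [hSteinerVol, ← hinner]; ring
  have hvolEpos : 0 < vol E := by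
    have hπ := Real.pi_pos
    have h1 : 0 < 2 * Real.pi * r ^ 2 := by positivity
    have h2 : 0 ≤ r * M := mul_nonneg hr.le hMnonneg
    rw [hvolE]; linarith
  have hPE : P E = (1 / r) * vol E := by
    rw [hSteinerPer, hvolE]; field_simp; ring
  have hzero : P E - (1 / r) * vol E = 0 := by rw [hPE]; ring
  have hmemset : (1 / r) ∈ S := by
    refine ⟨E, hEsub, hEmeas, hvolEpos, ?_⟩
    rw [hPE, mul_div_assoc, div_self hvolEpos.ne', mul_one]
  have hlb : ∀ x ∈ S, 1 / r ≤ x := by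
    rintro x ⟨F, hF, hFm, hFv, rfl⟩
    have hge := hEmin F hF hFm
    rw [hzero] at hge
    rw [le_div_iff₀ hFv]
    linarith
  rw [hdef]
  exact le_antisymm (csInf_le ⟨1 / r, hlb⟩ hmemset) (le_csInf ⟨_, hmemset⟩ hlb)
end
end

section
/- The function r ↦ M(r) := (|Ω^r ⊕ B_ε| − |Ω^r|)/ε + πε is upper semicontinuous in r on (0,R) for each fixed 0 < ε < r, provided: (i) r ↦ Ω^r is monotone decreasing in r (Ω^{r'} ⊇ Ω^{r} for r' ≤ r); (ii) |Ω^r \ Ω^{r₀}| → 0 as r → r₀⁻; (iii) for r → r₀⁻, ⋂_{r<r₀}(Ω^r ⊕ B_ε) \ (Ω^{r₀} ⊕ B_ε) ⊆ ∂(Ω^{r₀} ⊕ B_ε) and |∂(Ω^{r₀} ⊕ B_ε)| = 0. -/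
open MeasureTheory Set Pointwise

noncomputable section

open Metric Filter
open scoped ENNReal

/-- A positive level set of a distance function is Lebesgue-null (porosity argument). -/
lemma vol_levelSet_eq_zero (S : Set Pt) {c : ℝ} (hc : 0 < c) :
    volume {x : Pt | Metric.infDist x S = c} = 0 := by
  rcases S.eq_empty_or_nonempty with rfl | hSne
  · convert measure_empty (μ := (volume : Measure Pt))
    ext x; simp [Metric.infDist_empty]; exact hc.ne
  set L : Set Pt := {x | Metric.infDist x S = c} with hLdef
  by_contra hL0
  have hLclosed : IsClosed L :=
    isClosed_eq (continuous_infDist_pt S) continuous_const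
  have hmeasL : MeasurableSet L := hLclosed.measurableSet
  have hae := Besicovitch.ae_tendsto_measure_inter_div (volume : Measure Pt) L
  have hne : (ae ((volume : Measure Pt).restrict L)).NeBot :=
    ae_neBot.2 (by simpa [Measure.restrict_eq_zero] using hL0)
  obtain ⟨x, hx, hxL⟩ := (hae.and (ae_restrict_mem hmeasL)).exists
  -- nearest point
  have hxc : Metric.infDist x S = c := hxL
  obtain ⟨a, haS, hax⟩ :=
    isClosed_closure.exists_infDist_eq_dist (hSne.closure) x
  rw [Metric.infDist_closure, hxc] at hax
  -- porosity bound
  have key : ∀ r ∈ Set.Ioo (0:ℝ) (2*c),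
      volume (L ∩ closedBall x r) / volume (closedBall x r) ≤ 15/16 := by
    intro r hr
    set t := r/2 with ht
    have ht0 : 0 < t := by rw [ht]; linarith [hr.1]
    have htc : t < c := by rw [ht]; linarith [hr.2]
    set z : Pt := x + (t/c) • (a - x) with hz
    have hzx : dist z x = t := by
      rw [dist_eq_norm]
      have : z - x = (t/c) • (a - x) := by rw [hz]; abel
      rw [this, norm_smul]
      have : ‖a - x‖ = c := by
        rw [← dist_eq_norm, dist_comm, ← hax]
      rw [this, Real.norm_eq_abs, abs_of_nonneg (div_nonneg ht0.le hc.le),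
        div_mul_cancel₀ _ hc.ne']
    have hza : dist z a = c - t := by
      rw [dist_eq_norm]
      have h1 : z - a = (1 - t/c) • (x - a) := by
        rw [hz]; module
      rw [h1, norm_smul]
      have h2 : ‖x - a‖ = c := by rw [← dist_eq_norm, ← hax]
      rw [h2, Real.norm_eq_abs, abs_of_nonneg (by
        have := (div_lt_one hc).2 htc
        linarith)]
      field_simp
    -- ball z (t/2) avoids L and sits inside closedBall x r
    have hdisj : ball z (t/2) ∩ L = ∅ := by
      ext w
      simp only [Set.mem_inter_iff, Set.mem_empty_iff_false, iff_false, not_and,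
        Metric.mem_ball]
      intro hw hwL
      have h1 : Metric.infDist w S ≤ dist w a := by
        rw [← Metric.infDist_closure]
        exact Metric.infDist_le_dist_of_mem haS
      have h2 : dist w a ≤ dist w z + dist z a := dist_triangle _ _ _
      have : Metric.infDist w S < c := by
        rw [hza] at h2; nlinarith [h1, h2, hw]
      rw [hwL] at this; exact lt_irrefl _ this
    have hsub : ball z (t/2) ⊆ closedBall x r := by
      intro w hw
      rw [Metric.mem_ball] at hw
      rw [Metric.mem_closedBall]
      calc dist w x ≤ dist w z + dist z x := dist_triangle _ _ _
        _ ≤ t/2 + t := by rw [hzx]; linarith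
        _ ≤ r := by rw [ht]; linarith
    set w : ℝ≥0∞ := volume (ball z (t/2)) with hw
    have hw0 : w ≠ 0 := (measure_ball_pos _ _ (by linarith)).ne'
    have hwt : w ≠ ⊤ := measure_ball_lt_top.ne
    have hcb : volume (closedBall x r) = 16 * w := by
      rw [hw, Measure.addHaar_ball _ _ (by linarith : (0:ℝ) ≤ t/2),
        Measure.addHaar_closedBall _ _ hr.1.le, finrank_euclideanSpace_fin]
      have h16 : ENNReal.ofReal (r ^ 2) = (16:ℝ≥0∞) * ENNReal.ofReal ((t/2)^2) := by
        rw [show ((16:ℝ≥0∞)) = ENNReal.ofReal (16:ℝ) by simp,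
          ← ENNReal.ofReal_mul (by norm_num)]
        congr 1; rw [ht]; ring
      rw [h16, mul_assoc]
    have hdisj' : Disjoint (L ∩ closedBall x r) (ball z (t/2)) := by
      rw [Set.disjoint_left]
      intro p hp hpb
      have : p ∈ ball z (t/2) ∩ L := ⟨hpb, hp.1⟩
      rw [hdisj] at this
      exact this
    have hunion : volume (L ∩ closedBall x r) + w ≤ 16 * w := by
      rw [← hcb]
      calc volume (L ∩ closedBall x r) + volume (ball z (t/2))
          = volume ((L ∩ closedBall x r) ∪ ball z (t/2)) :=
            (measure_union hdisj' measurableSet_ball).symm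
        _ ≤ volume (closedBall x r) :=
            measure_mono (Set.union_subset Set.inter_subset_right hsub)
    have hnum : volume (L ∩ closedBall x r) ≤ 15 * w := by
      have h3 : (16:ℝ≥0∞) * w = 15 * w + w := by
        rw [← add_one_mul]; norm_num
      rw [h3] at hunion
      exact (ENNReal.add_le_add_iff_right hwt).1 hunion
    calc volume (L ∩ closedBall x r) / volume (closedBall x r)
        ≤ (15 * w) / (16 * w) := by
          rw [hcb]; exact ENNReal.div_le_div_right hnum _
      _ = 15 / 16 := ENNReal.mul_div_mul_right _ _ hw0 hwt
  have h1516 : (15:ℝ≥0∞)/16 < 1 := by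
    rw [ENNReal.div_lt_iff (by norm_num) (by norm_num)]; norm_num
  have hev := hx.eventually_const_lt h1516
  have hev2 : ∀ᶠ r in nhdsWithin (0:ℝ) (Set.Ioi 0), r ∈ Set.Ioo (0:ℝ) (2*c) :=
    Ioo_mem_nhdsGT_of_mem ⟨le_refl _, by linarith⟩
  obtain ⟨r, h1, h2⟩ := (hev.and hev2).exists
  exact absurd (key r h2) (not_le.2 h1)


lemma nullmeas_add_closedBall (S : Set Pt) {ε : ℝ} (hε : 0 < ε) :
    NullMeasurableSet (S + Metric.closedBall (0 : Pt) ε) volume := by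
  rcases S.eq_empty_or_nonempty with rfl | hS
  · simp [Set.empty_add]
  have h1 : Metric.thickening ε S ⊆ S + Metric.closedBall (0 : Pt) ε := by
    intro x hx
    obtain ⟨z, hz, hd⟩ := Metric.mem_thickening_iff.1 hx
    refine ⟨z, hz, x - z, ?_, by module⟩
    rw [Metric.mem_closedBall, dist_zero_right, ← dist_eq_norm]
    exact hd.le
  have h2 : (S + Metric.closedBall (0 : Pt) ε) \ Metric.thickening ε S
      ⊆ {x | Metric.infDist x S = ε} := by
    rintro x ⟨hx1, hx2⟩
    obtain ⟨z, hz, b, hb, hzb⟩ := hx1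
    have hle : Metric.infDist x S ≤ ε := by
      have : dist x z ≤ ε := by
        rw [← hzb, dist_eq_norm]
        simpa [Metric.mem_closedBall, dist_zero_right] using hb
      exact (Metric.infDist_le_dist_of_mem hz).trans this
    have hge : ε ≤ Metric.infDist x S := by
      by_contra hlt
      exact hx2 ((Metric.mem_thickening_iff_infDist_lt hS).2 (not_le.1 hlt))
    exact le_antisymm hle hge
  have : S + Metric.closedBall (0 : Pt) ε
      = Metric.thickening ε S ∪ ((S + Metric.closedBall (0 : Pt) ε) \ Metric.thickening ε S) :=
    (Set.union_diff_cancel h1).symm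
  rw [this]
  exact (Metric.isOpen_thickening.measurableSet.nullMeasurableSet).union
    (NullMeasurableSet.of_null (measure_mono_null h2 (vol_levelSet_eq_zero S hε)))

lemma vol_mono {F G : Set Pt} (h : F ⊆ G) (hG : volume G ≠ ⊤) : vol F ≤ vol G :=
  ENNReal.toReal_mono hG (measure_mono h)

lemma vol_le_add {F G H : Set Pt} (h : F ⊆ G ∪ H) (hG : volume G ≠ ⊤) (hH : volume H ≠ ⊤) :
    vol F ≤ vol G + vol H := by
  have h1 : volume F ≤ volume G + volume H := (measure_mono h).trans (measure_union_le _ _)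
  have h2 := ENNReal.toReal_mono (ENNReal.add_ne_top.2 ⟨hG, hH⟩) h1
  rwa [ENNReal.toReal_add hG hH] at h2


/-- Upper semicontinuity of the (approximate) outer Minkowski content
`M(r) = (|Ω^r ⊕ B_ε| - |Ω^r|)/ε + πε` of the inner parallel sets, under the
measure-theoretic hypotheses (i)–(iii). -/
theorem stmt18 (Ω : Set Pt) (hΩopen : IsOpen Ω) (hΩbdd : Bornology.IsBounded Ω)
    (R ε : ℝ) (hε : 0 < ε) (hεR : ε < R)
    (A : ℝ → Set Pt)
    (hAdef : ∀ r, A r = {x ∈ Ω | r ≤ Metric.infDist x (frontier Ω)})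
    -- (i) monotonicity
    (hmono : ∀ r' r : ℝ, r' ≤ r → A r ⊆ A r')
    -- (ii) left continuity of the volume
    (hleft : ∀ r₀ ∈ Set.Ioo ε R,
      Filter.Tendsto (fun r => vol (A r \ A r₀)) (nhdsWithin r₀ (Set.Iio r₀)) (nhds 0))
    -- (iii) the left limit of the tubular neighborhoods exceeds `A r₀ ⊕ B_ε`
    -- at most by its boundary, which is Lebesgue negligible
    (hcap : ∀ r₀ ∈ Set.Ioo ε R,
      (⋂ r ∈ Set.Iio r₀, (A r + Metric.closedBall (0 : Pt) ε)) \
          (A r₀ + Metric.closedBall (0 : Pt) ε)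
        ⊆ frontier (A r₀ + Metric.closedBall (0 : Pt) ε)
      ∧ vol (frontier (A r₀ + Metric.closedBall (0 : Pt) ε)) = 0) :
    UpperSemicontinuousOn
      (fun r => (vol (A r + Metric.closedBall (0 : Pt) ε) - vol (A r)) / ε + Real.pi * ε)
      (Set.Ioo ε R) := by
  intro r₀ hr₀ y hy
  obtain ⟨hr₀ε, hr₀R⟩ := hr₀
  set T : ℝ → Set Pt := fun r => A r + Metric.closedBall (0 : Pt) ε with hTdef
  have hy' : (vol (T r₀) - vol (A r₀)) / ε + Real.pi * ε < y := hy
  set K : Set Pt := closure (Ω + Metric.closedBall (0 : Pt) ε) with hKdef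
  have hKfin : volume K ≠ ⊤ :=
    ((hΩbdd.add Metric.isBounded_closedBall).closure.measure_lt_top).ne
  have hAΩ : ∀ r, A r ⊆ Ω := fun r x hx => by rw [hAdef] at hx; exact hx.1
  have hΩsub : Ω ⊆ Ω + Metric.closedBall (0 : Pt) ε := fun x hx =>
    ⟨x, hx, 0, by simp [Metric.mem_closedBall, hε.le], add_zero x⟩
  have hTK : ∀ r, T r ⊆ K := fun r =>
    (Set.add_subset_add_right (hAΩ r)).trans subset_closure
  have hAK : ∀ r, A r ⊆ K := fun r => ((hAΩ r).trans hΩsub).trans subset_closure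
  have hfin : ∀ F : Set Pt, F ⊆ K → volume F ≠ ⊤ := fun F hF =>
    ne_top_of_le_ne_top hKfin (measure_mono hF)
  have hTmono : ∀ {r' r : ℝ}, r' ≤ r → T r ⊆ T r' := fun h =>
    Set.add_subset_add_right (hmono _ _ h)
  have hTnull : ∀ r, NullMeasurableSet (T r) volume := fun r =>
    nullmeas_add_closedBall (A r) hε
  have hAmeas : ∀ r, MeasurableSet (A r) := by
    intro r
    rw [hAdef]
    exact hΩopen.measurableSet.inter
      (measurableSet_le measurable_const (Metric.continuous_infDist_pt _).measurable)
  have hfront : volume (frontier (T r₀)) = 0 := by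
    have h1 := (hcap r₀ ⟨hr₀ε, hr₀R⟩).2
    have h2 : volume (frontier (T r₀)) ≠ ⊤ :=
      hfin _ (frontier_subset_closure.trans
        (closure_mono (Set.add_subset_add_right (hAΩ r₀))))
    rcases (ENNReal.toReal_eq_zero_iff _).1 h1 with h | h
    · exact h
    · exact absurd h h2
  set yy : ℝ := (vol (T r₀) - vol (A r₀)) / ε + Real.pi * ε with hyy
  set η : ℝ := ε * (y - yy) / 2 with hη
  have hηpos : 0 < η := by
    have h := sub_pos.2 hy'
    rw [hη]; nlinarith
  -- right side: choose r₂
  have hright : ∃ r₂ ∈ Set.Ioo r₀ R, vol (A r₀ \ A r₂) ≤ η := by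
    set c₂ : ℝ := (R - r₀) / 2 with hc₂
    have hc₂pos : 0 < c₂ := by rw [hc₂]; linarith
    set s : ℕ → Set Pt := fun n => A r₀ \ A (r₀ + c₂ / (n + 1)) with hs
    have hanti : Antitone s := by
      intro n m hnm
      apply Set.diff_subset_diff_right
      apply hmono
      have h1 : (0:ℝ) < (n:ℝ) + 1 := by positivity
      have h2 : ((n:ℝ) + 1) ≤ (m:ℝ) + 1 := by exact_mod_cast by omega
      have h3 := div_le_div_of_nonneg_left hc₂pos.le h1 h2
      linarith
    have hiinter : volume (⋂ n, s n) = 0 := by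
      refine measure_mono_null ?_
        (vol_levelSet_eq_zero (frontier Ω) (by linarith : (0:ℝ) < r₀))
      intro x hx
      simp only [hs, Set.mem_iInter, Set.mem_diff] at hx
      have hx0 := (hx 0).1
      rw [hAdef] at hx0
      show Metric.infDist x (frontier Ω) = r₀
      by_contra h
      have hgt : r₀ < Metric.infDist x (frontier Ω) := lt_of_le_of_ne hx0.2 (Ne.symm h)
      set dd : ℝ := Metric.infDist x (frontier Ω) - r₀ with hdd
      have hddpos : 0 < dd := by rw [hdd]; linarith
      obtain ⟨n, hn⟩ := exists_nat_ge (c₂ / dd)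
      have hle : c₂ / ((n:ℝ) + 1) ≤ dd := by
        rw [div_le_iff₀ (by positivity)]
        rw [div_le_iff₀ hddpos] at hn
        nlinarith
      exact (hx n).2 (by rw [hAdef]; exact ⟨hx0.1, by rw [hdd] at hle; linarith⟩)
    have htend := tendsto_measure_iInter_atTop (μ := (volume : Measure Pt))
      (fun n => ((hAmeas r₀).diff (hAmeas _)).nullMeasurableSet) hanti
      ⟨0, hfin _ (Set.diff_subset.trans (hAK r₀))⟩
    rw [hiinter] at htend
    have hev : ∀ᶠ n in Filter.atTop, volume (s n) < ENNReal.ofReal η :=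
      htend.eventually_lt_const (by simp [ENNReal.ofReal_pos, hηpos])
    obtain ⟨n, hn⟩ := hev.exists
    refine ⟨r₀ + c₂ / (n + 1), ⟨by
      have h0 : (0:ℝ) < c₂ / ((n:ℝ) + 1) := by positivity
      linarith, ?_⟩, ?_⟩
    · have h4 : c₂ / ((n:ℝ) + 1) ≤ c₂ := div_le_self hc₂pos.le (by norm_num)
      rw [hc₂] at h4 ⊢
      linarith
    · exact ENNReal.toReal_le_of_le_ofReal hηpos.le hn.le
  -- left side: choose r₁
  have hleft' : ∃ r₁ ∈ Set.Ioo ε r₀, vol (T r₁ \ T r₀) ≤ η := by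
    set c₁ : ℝ := (r₀ - ε) / 2 with hc₁
    have hc₁pos : 0 < c₁ := by rw [hc₁]; linarith
    set s : ℕ → Set Pt := fun n => T (r₀ - c₁ / (n + 1)) \ T r₀ with hs
    have hanti : Antitone s := by
      intro n m hnm
      apply Set.diff_subset_diff_left
      apply hTmono
      have h1 : (0:ℝ) < (n:ℝ) + 1 := by positivity
      have h2 : ((n:ℝ) + 1) ≤ (m:ℝ) + 1 := by exact_mod_cast by omega
      have h3 := div_le_div_of_nonneg_left hc₁pos.le h1 h2
      linarith
    have hiinter : volume (⋂ n, s n) = 0 := by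
      refine measure_mono_null ?_ hfront
      intro x hx
      simp only [hs, Set.mem_iInter, Set.mem_diff] at hx
      refine (hcap r₀ ⟨hr₀ε, hr₀R⟩).1 ⟨?_, (hx 0).2⟩
      simp only [Set.mem_iInter]
      intro r hr
      have hrpos : 0 < r₀ - r := sub_pos.2 hr
      obtain ⟨n, hn⟩ := exists_nat_ge (c₁ / (r₀ - r))
      have hle : c₁ / ((n:ℝ) + 1) ≤ r₀ - r := by
        rw [div_le_iff₀ (by positivity)]
        rw [div_le_iff₀ hrpos] at hn
        nlinarith
      exact hTmono (by linarith) (hx n).1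
    have htend := tendsto_measure_iInter_atTop (μ := (volume : Measure Pt))
      (fun n => (hTnull _).diff (hTnull _)) hanti
      ⟨0, hfin _ (Set.diff_subset.trans (hTK _))⟩
    rw [hiinter] at htend
    have hev : ∀ᶠ n in Filter.atTop, volume (s n) < ENNReal.ofReal η :=
      htend.eventually_lt_const (by simp [ENNReal.ofReal_pos, hηpos])
    obtain ⟨n, hn⟩ := hev.exists
    refine ⟨r₀ - c₁ / (n + 1), ⟨?_, ?_⟩, ?_⟩
    · have h4 : c₁ / ((n:ℝ) + 1) ≤ c₁ := div_le_self hc₁pos.le (by norm_num)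
      rw [hc₁] at h4
      linarith
    · have h5 : (0:ℝ) < c₁ / ((n:ℝ) + 1) := by positivity
      linarith
    · exact ENNReal.toReal_le_of_le_ofReal hηpos.le hn.le
  obtain ⟨r₂, hr₂, hr₂vol⟩ := hright
  obtain ⟨r₁, hr₁, hr₁vol⟩ := hleft'
  have hnb : ∀ᶠ r in nhdsWithin r₀ (Set.Ioo ε R), r ∈ Set.Ioo r₁ r₂ :=
    nhdsWithin_le_nhds (Ioo_mem_nhds hr₁.2 hr₂.1)
  filter_upwards [hnb, self_mem_nhdsWithin] with r hrmem hrIoo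
  show (vol (T r) - vol (A r)) / ε + Real.pi * ε < y
  have hkey : vol (T r) - vol (A r) ≤ vol (T r₀) - vol (A r₀) + η := by
    rcases le_or_gt r r₀ with h | h
    · have h1 : vol (T r) ≤ vol (T r₀) + vol (T r₁ \ T r₀) := by
        apply vol_le_add ?_ (hfin _ (hTK r₀)) (hfin _ (Set.diff_subset.trans (hTK r₁)))
        intro x hx
        rcases Classical.em (x ∈ T r₀) with hx0 | hx0
        · exact Or.inl hx0
        · exact Or.inr ⟨hTmono hrmem.1.le hx, hx0⟩
      have h2 : vol (A r₀) ≤ vol (A r) := vol_mono (hmono r r₀ h) (hfin _ (hAK r))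
      linarith
    · have h1 : vol (T r) ≤ vol (T r₀) := vol_mono (hTmono h.le) (hfin _ (hTK r₀))
      have h2 : vol (A r₀) ≤ vol (A r) + vol (A r₀ \ A r₂) := by
        apply vol_le_add ?_ (hfin _ (hAK r)) (hfin _ (Set.diff_subset.trans (hAK r₀)))
        intro x hx
        rcases Classical.em (x ∈ A r) with hx0 | hx0
        · exact Or.inl hx0
        · exact Or.inr ⟨hx, fun hx2 => hx0 (hmono r r₂ hrmem.2.le hx2)⟩
      linarith
  have hdivle : (vol (T r) - vol (A r)) / ε ≤ (vol (T r₀) - vol (A r₀)) / ε + η / ε := by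
    rw [← add_div]
    gcongr
  have hηε : η / ε = (y - yy) / 2 := by
    rw [hη]; field_simp
  have : (vol (T r) - vol (A r)) / ε + Real.pi * ε ≤ yy + (y - yy) / 2 := by
    rw [hyy]; linarith [hdivle, hηε]
  have hyyy : yy < y := hy'
  linarith [this]
end
end
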